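/- Let (X,Z) be a random vector with copula C and continuous marginals F, G, with Z integrable and symmetric around zero (G(-z) = 1 - G(z) for all z). If C(u,v) + C(u,1-v) ≥ u for all u,v ∈ [0,1], then Cov(X,Z) ≥ 0 (whenever the covariance exists). -/

import Mathlib

open MeasureTheory Set

/-- A (bivariate) copula: grounded, with uniform marginals, and 2-increasing. -/
structure IsCopula (C : ℝ → ℝ → ℝ) : Prop where
  grounded_fst : ∀ v ∈ Icc (0:ℝ) 1, C 0 v = 0
  grounded_snd : ∀ u ∈ Icc (0:ℝ) 1, C u 0 = 0
  margin_fst : ∀ u ∈ Icc (0:ℝ) 1, C u 1 = u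
  margin_snd : ∀ v ∈ Icc (0:ℝ) 1, C 1 v = v
  twoIncreasing : ∀ u₁ u₂ v₁ v₂ : ℝ, u₁ ∈ Icc (0:ℝ) 1 → u₂ ∈ Icc (0:ℝ) 1 →
    v₁ ∈ Icc (0:ℝ) 1 → v₂ ∈ Icc (0:ℝ) 1 → u₁ ≤ u₂ → v₁ ≤ v₂ →
    C u₁ v₂ + C u₂ v₁ ≤ C u₁ v₁ + C u₂ v₂

/-!
Symmetry of `Z` gives `E Z = 0`, so only `E[XZ] ≥ 0` has to be shown. Writing
`x = ∫₀^∞ (1{t < x} - 1{x ≤ -t}) dt` and applying Fubini,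
`E[XZ] = ∫₀^∞ (E[Z; t < X] - E[Z; X ≤ -t]) dt`.
By the layer-cake formula, `E[Z; X ≤ x] ≤ 0` as soon as `P(X ≤ x, t < Z) ≤ P(X ≤ x, Z ≤ -t)`
for `t > 0`; these probabilities are `F x - C(F x, G t)` and `C(F x, G(-t)) = C(F x, 1 - G t)`,
so this is the hypothesis `C(u, v) + C(u, 1 - v) ≥ u`. Together with `E Z = 0` it also gives
`E[Z; t < X] ≥ 0`, so the integrand above is nonnegative. Strict inequalities for upper tails
and weak ones for lower tails keep every probability a value of the joint distribution function.
-/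

noncomputable def signedLayer (x t : ℝ) : ℝ := (Iio x).indicator 1 t - (Iic (-x)).indicator 1 t

lemma integrableOn_Ioi_zero_indicator_Iio (x : ℝ) :
    IntegrableOn ((Iio x).indicator (1 : ℝ → ℝ)) (Ioi 0) := by
  refine (integrable_indicator_iff measurableSet_Iio).2 (integrableOn_const ?_)
  simp [Measure.restrict_apply measurableSet_Iio, Iio_inter_Ioi]

lemma integrableOn_Ioi_zero_indicator_Iic (x : ℝ) :
    IntegrableOn ((Iic x).indicator (1 : ℝ → ℝ)) (Ioi 0) := by
  refine (integrable_indicator_iff measurableSet_Iic).2 (integrableOn_const ?_)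
  simp [Measure.restrict_apply measurableSet_Iic, Iic_inter_Ioi]

lemma setIntegral_Ioi_zero_indicator_Iio (x : ℝ) :
    ∫ t in Ioi 0, (Iio x).indicator 1 t = max x 0 := by
  rw [integral_indicator_one measurableSet_Iio, measureReal_restrict_apply measurableSet_Iio,
    Iio_inter_Ioi, Real.volume_real_Ioo, sub_zero]

lemma setIntegral_Ioi_zero_indicator_Iic (x : ℝ) :
    ∫ t in Ioi 0, (Iic x).indicator 1 t = max x 0 := by
  rw [integral_indicator_one measurableSet_Iic, measureReal_restrict_apply measurableSet_Iic,
    Iic_inter_Ioi, Real.volume_real_Ioc, sub_zero]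

lemma integrableOn_signedLayer (x : ℝ) : IntegrableOn (signedLayer x) (Ioi 0) :=
  (integrableOn_Ioi_zero_indicator_Iio x).sub (integrableOn_Ioi_zero_indicator_Iic (-x))

lemma integral_signedLayer (x : ℝ) : ∫ t in Ioi 0, signedLayer x t = x := by
  simp only [signedLayer]
  rw [integral_sub (integrableOn_Ioi_zero_indicator_Iio x)
      (integrableOn_Ioi_zero_indicator_Iic (-x)),
    setIntegral_Ioi_zero_indicator_Iio, setIntegral_Ioi_zero_indicator_Iic,
    max_zero_sub_max_neg_zero_eq_self]

lemma abs_signedLayer {x t : ℝ} (ht : 0 < t) :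
    |signedLayer x t| = (Iio x).indicator 1 t + (Iic (-x)).indicator 1 t := by
  simp only [signedLayer, indicator_apply, mem_Iio, mem_Iic, Pi.one_apply]
  split_ifs <;> norm_num
  linarith

lemma integral_abs_signedLayer (x : ℝ) : ∫ t in Ioi 0, |signedLayer x t| = |x| := by
  rw [setIntegral_congr_fun measurableSet_Ioi fun t ht => abs_signedLayer ht,
    integral_add (integrableOn_Ioi_zero_indicator_Iio x)
      (integrableOn_Ioi_zero_indicator_Iic (-x)),
    setIntegral_Ioi_zero_indicator_Iio, setIntegral_Ioi_zero_indicator_Iic,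
    max_zero_add_max_neg_zero_eq_abs_self]

lemma measurable_signedLayer : Measurable (Function.uncurry signedLayer) := by
  unfold signedLayer Function.uncurry
  simp only [indicator_apply, mem_Iio, mem_Iic, Pi.one_apply]
  exact (Measurable.ite (measurableSet_lt measurable_snd measurable_fst) measurable_const
    measurable_const).sub (Measurable.ite (measurableSet_le measurable_snd measurable_fst.neg)
    measurable_const measurable_const)

lemma signedLayer_mul_eq_indicator_sub_indicator {Ω : Type*} (X Y : Ω → ℝ) (t : ℝ) (ω : Ω) :
    signedLayer (X ω) t * Y ω = {ω | t < X ω}.indicator Y ω - {ω | X ω ≤ -t}.indicator Y ω := by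
  simp only [signedLayer, indicator_apply, mem_Iio, mem_Iic, mem_ofPred_eq, Pi.one_apply, le_neg]
  split_ifs <;> ring

theorem integral_mul_eq_integral_Ioi_setIntegral_sub {Ω : Type*} [MeasurableSpace Ω]
    {μ : Measure Ω} [SFinite μ] {X Y : Ω → ℝ} (hX : Measurable X) (hY : Integrable Y μ)
    (hXY : Integrable (fun ω => X ω * Y ω) μ) :
    ∫ ω, X ω * Y ω ∂μ =
      ∫ t in Ioi 0, ((∫ ω in {ω | t < X ω}, Y ω ∂μ) - ∫ ω in {ω | X ω ≤ -t}, Y ω ∂μ) := by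
  set f : Ω → ℝ → ℝ := fun ω t => signedLayer (X ω) t * Y ω
  have hf_meas : AEStronglyMeasurable (Function.uncurry f) (μ.prod (volume.restrict (Ioi 0))) :=
    (measurable_signedLayer.comp (hX.prodMap measurable_id)).aestronglyMeasurable.mul
      hY.aestronglyMeasurable.comp_fst
  have hf_int : Integrable (Function.uncurry f) (μ.prod (volume.restrict (Ioi 0))) := by
    refine (integrable_prod_iff hf_meas).2
      ⟨ae_of_all _ fun ω => (integrableOn_signedLayer (X ω)).mul_const (Y ω), ?_⟩
    simpa only [f, Function.uncurry_apply_pair, Real.norm_eq_abs, abs_mul, integral_mul_const,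
      integral_abs_signedLayer] using hXY.abs
  have hlt_meas : ∀ t : ℝ, MeasurableSet {ω | t < X ω} := fun t => hX measurableSet_Ioi
  have hle_meas : ∀ t : ℝ, MeasurableSet {ω | X ω ≤ -t} := fun t => hX measurableSet_Iic
  calc ∫ ω, X ω * Y ω ∂μ = ∫ ω, (∫ t in Ioi (0 : ℝ), f ω t) ∂μ := by
        simp only [f, integral_mul_const, integral_signedLayer]
    _ = ∫ t in Ioi (0 : ℝ), ∫ ω, f ω t ∂μ := integral_integral_swap hf_int
    _ = _ := by
        congr 1 with t
        simp only [f, signedLayer_mul_eq_indicator_sub_indicator]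
        rw [integral_sub (hY.indicator (hlt_meas t)) (hY.indicator (hle_meas t)),
          integral_indicator (hlt_meas t), integral_indicator (hle_meas t)]

section LayerCake

variable {α : Type*} [MeasurableSpace α] {ν : Measure α} {f : α → ℝ}

theorem lintegral_ofReal_eq_lintegral_meas_lt (hf : AEMeasurable f ν) :
    ∫⁻ ω, ENNReal.ofReal (f ω) ∂ν = ∫⁻ t in Ioi 0, ν {ω | t < f ω} := by
  have h := lintegral_eq_lintegral_meas_lt ν (ae_of_all _ fun ω => le_max_right (f ω) 0)
    (hf.max aemeasurable_const)
  simp only [ENNReal.ofReal_max, ENNReal.ofReal_zero, max_zero] at h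
  rw [h]
  refine setLIntegral_congr_fun measurableSet_Ioi fun t ht => ?_
  simp only [lt_max_iff, not_lt_of_gt (mem_Ioi.1 ht), or_false]

theorem lintegral_ofReal_eq_lintegral_meas_le (hf : AEMeasurable f ν) :
    ∫⁻ ω, ENNReal.ofReal (f ω) ∂ν = ∫⁻ t in Ioi 0, ν {ω | t ≤ f ω} := by
  have h := lintegral_eq_lintegral_meas_le ν (ae_of_all _ fun ω => le_max_right (f ω) 0)
    (hf.max aemeasurable_const)
  simp only [ENNReal.ofReal_max, ENNReal.ofReal_zero, max_zero] at h
  rw [h]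
  refine setLIntegral_congr_fun measurableSet_Ioi fun t ht => ?_
  simp only [le_max_iff, not_le_of_gt (mem_Ioi.1 ht), or_false]

theorem integral_eq_toReal_lintegral_meas_lt_sub (hf : Integrable f ν) :
    ∫ ω, f ω ∂ν = (∫⁻ t in Ioi 0, ν {ω | t < f ω}).toReal
      - (∫⁻ t in Ioi 0, ν {ω | f ω ≤ -t}).toReal := by
  simp only [← le_neg (b := f _)]
  rw [integral_eq_lintegral_pos_part_sub_lintegral_neg_part hf,
    lintegral_ofReal_eq_lintegral_meas_lt hf.aemeasurable,
    lintegral_ofReal_eq_lintegral_meas_le (f := fun ω => -f ω) hf.aemeasurable.neg]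

theorem integral_nonpos_of_meas_lt_le_meas_le_neg (hf : Integrable f ν)
    (h : ∀ t > 0, ν {ω | t < f ω} ≤ ν {ω | f ω ≤ -t}) : ∫ ω, f ω ∂ν ≤ 0 := by
  rw [integral_eq_toReal_lintegral_meas_lt_sub hf, sub_nonpos]
  refine ENNReal.toReal_mono ?_ (setLIntegral_mono' measurableSet_Ioi h)
  simpa only [← le_neg (b := f _),
    ← lintegral_ofReal_eq_lintegral_meas_le (f := fun ω => -f ω) hf.aemeasurable.neg]
    using hf.fun_neg.lintegral_lt_top.ne

theorem integral_eq_zero_of_meas_lt_eq_meas_le_neg (hf : Integrable f ν)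
    (h : ∀ t > 0, ν {ω | t < f ω} = ν {ω | f ω ≤ -t}) : ∫ ω, f ω ∂ν = 0 := by
  rw [integral_eq_toReal_lintegral_meas_lt_sub hf, setLIntegral_congr_fun measurableSet_Ioi h,
    sub_self]

end LayerCake

section Copula

variable {Ω : Type*} [MeasurableSpace Ω] {μ : Measure Ω} [IsProbabilityMeasure μ]
  {X Z : Ω → ℝ} {C : ℝ → ℝ → ℝ} {F G : ℝ → ℝ}

theorem measure_lt_eq_measure_le_neg_of_symm (hZ : Measurable Z)
    (hG : ∀ z : ℝ, G z = (μ {ω | Z ω ≤ z}).toReal) (hsymm : ∀ z : ℝ, G (-z) = 1 - G z) (t : ℝ) :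
    μ {ω | t < Z ω} = μ {ω | Z ω ≤ -t} := by
  have hcompl : {ω | t < Z ω} = {ω | Z ω ≤ t}ᶜ := by ext; simp
  have hmZ : MeasurableSet {ω | Z ω ≤ t} := hZ measurableSet_Iic
  rw [← measureReal_eq_measureReal_iff, hcompl, probReal_compl_eq_one_sub (μ := μ) hmZ,
    measureReal_def, measureReal_def, ← hG, ← hG, hsymm]

theorem measure_lt_inter_le_measure_le_neg_inter (hZ : Measurable Z)
    (hF : ∀ x : ℝ, F x = (μ {ω | X ω ≤ x}).toReal)
    (hG : ∀ z : ℝ, G z = (μ {ω | Z ω ≤ z}).toReal)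
    (hjoint : ∀ x z : ℝ, (μ {ω | X ω ≤ x ∧ Z ω ≤ z}).toReal = C (F x) (G z))
    (hsymm : ∀ z : ℝ, G (-z) = 1 - G z)
    (hwPQD : ∀ u ∈ Icc (0:ℝ) 1, ∀ v ∈ Icc (0:ℝ) 1, u ≤ C u v + C u (1 - v)) (x t : ℝ) :
    μ ({ω | t < Z ω} ∩ {ω | X ω ≤ x}) ≤ μ ({ω | Z ω ≤ -t} ∩ {ω | X ω ≤ x}) := by
  have hjoint' : ∀ z, μ.real ({ω | Z ω ≤ z} ∩ {ω | X ω ≤ x}) = C (F x) (G z) := fun z => by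
    rw [← hjoint, inter_comm]; rfl
  have hupper : μ.real ({ω | t < Z ω} ∩ {ω | X ω ≤ x}) + C (F x) (G t) = F x := by
    have hmZ : MeasurableSet {ω | Z ω ≤ t} := hZ measurableSet_Iic
    have hdiff : {ω | t < Z ω} ∩ {ω | X ω ≤ x} = {ω | X ω ≤ x} \ {ω | Z ω ≤ t} := by
      ext; simp [and_comm]
    rw [← hjoint' t, hdiff, inter_comm, measureReal_sdiff_add_inter (μ := μ) hmZ, hF]
    rfl
  have hlower : μ.real ({ω | Z ω ≤ -t} ∩ {ω | X ω ≤ x}) = C (F x) (1 - G t) := by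
    rw [hjoint', hsymm]
  have hw := hwPQD (F x) (hF x ▸ ⟨measureReal_nonneg, measureReal_le_one⟩) (G t)
    (hG t ▸ ⟨measureReal_nonneg, measureReal_le_one⟩)
  rw [← ENNReal.toReal_le_toReal (by finiteness) (by finiteness)]
  change μ.real _ ≤ μ.real _
  linarith

end Copula

theorem stmt16_general {Ω : Type*} [MeasurableSpace Ω] (μ : Measure Ω) [IsProbabilityMeasure μ]
    (X Z : Ω → ℝ) (hX : Measurable X) (hZmeas : Measurable Z)
    (hZint : Integrable Z μ)
    (hXZint : Integrable (fun ω => X ω * Z ω) μ)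
    (C : ℝ → ℝ → ℝ)
    (F G : ℝ → ℝ)
    (hF : ∀ x : ℝ, F x = (μ {ω | X ω ≤ x}).toReal)
    (hG : ∀ z : ℝ, G z = (μ {ω | Z ω ≤ z}).toReal)
    (hjoint : ∀ x z : ℝ, (μ {ω | X ω ≤ x ∧ Z ω ≤ z}).toReal = C (F x) (G z))
    (hsymm : ∀ z : ℝ, G (-z) = 1 - G z)
    (hwPQD : ∀ u ∈ Icc (0:ℝ) 1, ∀ v ∈ Icc (0:ℝ) 1, u ≤ C u v + C u (1 - v)) :
    0 ≤ (∫ ω, X ω * Z ω ∂μ) - (∫ ω, X ω ∂μ) * (∫ ω, Z ω ∂μ) := by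
  have hmean : ∫ ω, Z ω ∂μ = 0 := integral_eq_zero_of_meas_lt_eq_meas_le_neg hZint fun t _ =>
    measure_lt_eq_measure_le_neg_of_symm hZmeas hG hsymm t
  have hlower (x : ℝ) : ∫ ω in {ω | X ω ≤ x}, Z ω ∂μ ≤ 0 :=
    integral_nonpos_of_meas_lt_le_meas_le_neg hZint.restrict fun t _ => by
      rw [Measure.restrict_apply (measurableSet_lt measurable_const hZmeas),
        Measure.restrict_apply (measurableSet_le hZmeas measurable_const)]
      exact measure_lt_inter_le_measure_le_neg_inter hZmeas hF hG hjoint hsymm hwPQD x t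
  have hupper (x : ℝ) : 0 ≤ ∫ ω in {ω | x < X ω}, Z ω ∂μ := by
    have hcompl : {ω | X ω ≤ x}ᶜ = {ω | x < X ω} := by ext; simp
    have hsplit := integral_add_compl (measurableSet_le hX (measurable_const (a := x))) hZint
    rw [hmean, hcompl] at hsplit
    linarith [hlower x]
  rw [hmean, mul_zero, sub_zero, integral_mul_eq_integral_Ioi_setIntegral_sub hX hZint hXZint]
  exact setIntegral_nonneg measurableSet_Ioi fun t _ =>
    sub_nonneg.2 ((hlower (-t)).trans (hupper t))

/-- If `(X,Z)` has copula `C` with continuous marginals, `Z` is integrable and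
symmetric around zero, and `C(u,v) + C(u,1-v) ≥ u` (wPQD), then `Cov(X,Z) ≥ 0`. -/
theorem stmt16 {Ω : Type*} [MeasurableSpace Ω] (μ : Measure Ω) [IsProbabilityMeasure μ]
    (X Z : Ω → ℝ) (hX : Measurable X) (hZmeas : Measurable Z)
    (hXint : Integrable X μ) (hZint : Integrable Z μ)
    (hXZint : Integrable (fun ω => X ω * Z ω) μ)
    (C : ℝ → ℝ → ℝ) (hC : IsCopula C)
    (F G : ℝ → ℝ)
    (hF : ∀ x : ℝ, F x = (μ {ω | X ω ≤ x}).toReal)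
    (hG : ∀ z : ℝ, G z = (μ {ω | Z ω ≤ z}).toReal)
    (hFcont : Continuous F) (hGcont : Continuous G)
    (hjoint : ∀ x z : ℝ, (μ {ω | X ω ≤ x ∧ Z ω ≤ z}).toReal = C (F x) (G z))
    (hsymm : ∀ z : ℝ, G (-z) = 1 - G z)
    (hwPQD : ∀ u ∈ Icc (0:ℝ) 1, ∀ v ∈ Icc (0:ℝ) 1, u ≤ C u v + C u (1 - v)) :
    0 ≤ (∫ ω, X ω * Z ω ∂μ) - (∫ ω, X ω ∂μ) * (∫ ω, Z ω ∂μ) :=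
  stmt16_general μ X Z hX hZmeas hZint hXZint C F G hF hG hjoint hsymm hwPQD
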